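/- arXiv:1511.03483 — 4 statements merged into one kernel-verified Lean document; each statement's English description precedes it below -/
import Mathlib

section
/- Let R be an L×L real non-singular upper triangular matrix with pairwise distinct diagonal entries, and let p_{i,j,k} denote its power factors. Fix t ≥ 1. If the entries of the matrix power R^t satisfy (R^t)_{i,j} = Σ_{k=i}^{j} p_{i,j,k} (r_{k,k})^{t-1} for all 1 ≤ i ≤ j ≤ L, then the entries of R^{t+1} satisfy (R^{t+1})_{i,j} = Σ_{k=i}^{j} p_{i,j,k} (r_{k,k})^{t} for all 1 ≤ i ≤ j ≤ L. -/
open Matrix Finset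

/-- The power factors `p i j k` of a matrix with entries `r i j`
(indices `1, …, L`), defined recursively by: `p j j j = r j j`;
`p i j k = 0` if `k < i` or `k > j`;
`p i j k = (∑ l = k to j-1, p i l k * r l j) / (r k k - r j j)` for `i ≤ k < j`;
`p i j j = r i j - ∑ l = i to j-1, p i j l` for `i < j`. -/
noncomputable def powerFactor (r : ℕ → ℕ → ℝ) : ℕ → ℕ → ℕ → ℝ
  | i, j, k =>
    if _h0 : k < i ∨ j < k then 0
    else if _h1 : k < j then
      (∑ l ∈ (Finset.Icc k (j - 1)).attach,
        powerFactor r i l.1 k * r l.1 j) / (r k k - r j j)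
    else if _h2 : i < j then
      r i j - ∑ l ∈ (Finset.Icc i (j - 1)).attach, powerFactor r i j l.1
    else r j j
termination_by i j k => (j, k)
decreasing_by
  · have := Finset.mem_Icc.mp l.2
    exact Prod.Lex.left _ _ (by omega)
  · have := Finset.mem_Icc.mp l.2
    exact Prod.Lex.right _ (by omega)

/-!
Writing `(R^t)_{i,j} = ∑_k p i j k * x_k` with `x_k = r_{k,k}^(t-1)`, the entry
`(R^{t+1})_{i,j} = ∑_l (R^t)_{i,l} r_{l,j}` becomes, after exchanging the sums,
`∑_k x_k ∑_{l=k}^{j} p i l k * r l j`. The recursion defining `p i j k` for `k < j` is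
exactly the statement that this inner sum equals `p i j k * r k k`, so each `x_k` is
multiplied by `r k k`.
-/

theorem Matrix.IsUpperTriangular.mul_apply_eq_sum_Icc {m R : Type*} [Fintype m] [LinearOrder m]
    [LocallyFiniteOrder m] [NonUnitalNonAssocSemiring R] {A B : Matrix m m R}
    (hA : A.IsUpperTriangular) (hB : B.IsUpperTriangular) (a b : m) :
    (A * B) a b = ∑ c ∈ Icc a b, A a c * B c b := by
  rw [mul_apply]
  refine (sum_subset (subset_univ _) fun c _ hc => ?_).symm
  rcases not_and_or.mp (mem_Icc.not.mp hc) with hac | hcb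
  · rw [hA (lt_of_not_ge hac), zero_mul]
  · rw [hB (lt_of_not_ge hcb), mul_zero]

theorem Fin.sum_Icc_val_add_one {M : Type*} [AddCommMonoid M] {L : ℕ} (f : ℕ → M)
    (a b : Fin L) : ∑ c ∈ Icc a b, f (c.val + 1) = ∑ l ∈ Icc (a.val + 1) (b.val + 1), f l := by
  rw [← map_add_right_Icc, sum_map, ← Fin.map_valEmbedding_Icc, sum_map]
  rfl

theorem powerFactor_of_le_of_lt (r : ℕ → ℕ → ℝ) {i j k : ℕ} (hik : i ≤ k) (hkj : k < j) :
    powerFactor r i j k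
      = (∑ l ∈ Icc k (j - 1), powerFactor r i l k * r l j) / (r k k - r j j) := by
  rw [powerFactor, dif_neg (by omega), dif_pos hkj,
    sum_attach (Icc k (j - 1)) fun l => powerFactor r i l k * r l j]

theorem sum_Icc_powerFactor_mul (r : ℕ → ℕ → ℝ) {i j k : ℕ} (hik : i ≤ k) (hkj : k ≤ j)
    (hdist : k ≠ j → r k k ≠ r j j) :
    ∑ l ∈ Icc k j, powerFactor r i l k * r l j = powerFactor r i j k * r k k := by
  obtain rfl | hkj := hkj.eq_or_lt
  · simp
  obtain ⟨m, rfl⟩ : ∃ m, j = m + 1 := ⟨j - 1, by omega⟩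
  have hne : r k k - r (m + 1) (m + 1) ≠ 0 := sub_ne_zero.mpr (hdist hkj.ne)
  have hrec : ∑ l ∈ Icc k m, powerFactor r i l k * r l (m + 1)
      = powerFactor r i (m + 1) k * (r k k - r (m + 1) (m + 1)) := by
    rw [powerFactor_of_le_of_lt r hik hkj, Nat.add_sub_cancel, div_mul_cancel₀ _ hne]
  rw [sum_Icc_succ_top (by omega), hrec]
  ring

theorem sum_Icc_sum_powerFactor_mul (r : ℕ → ℕ → ℝ) (x : ℕ → ℝ) {i j : ℕ}
    (hdist : ∀ k ∈ Icc i j, k ≠ j → r k k ≠ r j j) :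
    ∑ l ∈ Icc i j, (∑ k ∈ Icc i l, powerFactor r i l k * x k) * r l j
      = ∑ k ∈ Icc i j, powerFactor r i j k * (x k * r k k) := by
  simp_rw [sum_mul]
  rw [sum_comm' (t' := Icc i j) (s' := fun k => Icc k j)
    (by intro l k; simp only [mem_Icc]; omega)]
  refine sum_congr rfl fun k hk => ?_
  have hk' := mem_Icc.mp hk
  calc ∑ l ∈ Icc k j, powerFactor r i l k * x k * r l j
      = x k * ∑ l ∈ Icc k j, powerFactor r i l k * r l j := by
        rw [mul_sum]; exact sum_congr rfl fun _ _ => by ring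
    _ = powerFactor r i j k * (x k * r k k) := by
        rw [sum_Icc_powerFactor_mul r hk'.1 hk'.2 (hdist k hk)]; ring

theorem power_factor_induction_step_general
    (L : ℕ) (r : ℕ → ℕ → ℝ)
    (htri : ∀ i j, 1 ≤ i → i ≤ L → 1 ≤ j → j ≤ L → j < i → r i j = 0)
    (hdist : ∀ i j, 1 ≤ i → i ≤ L → 1 ≤ j → j ≤ L → i ≠ j → r i i ≠ r j j)
    (R : Matrix (Fin L) (Fin L) ℝ)
    (hR : R = Matrix.of fun a b : Fin L => r (a.val + 1) (b.val + 1))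
    (t : ℕ) (ht : 1 ≤ t)
    (hind : ∀ a b : Fin L, a ≤ b →
      (R ^ t) a b = ∑ k ∈ Finset.Icc (a.val + 1) (b.val + 1),
        powerFactor r (a.val + 1) (b.val + 1) k * (r k k) ^ (t - 1)) :
    ∀ a b : Fin L, a ≤ b →
      (R ^ (t + 1)) a b = ∑ k ∈ Finset.Icc (a.val + 1) (b.val + 1),
        powerFactor r (a.val + 1) (b.val + 1) k * (r k k) ^ t := by
  intro a b _
  have hupper : R.IsUpperTriangular := fun c d hdc => by
    rw [hR]; exact htri _ _ (by omega) (by omega) (by omega) (by omega) (by simpa using hdc)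
  calc (R ^ (t + 1)) a b = ∑ c ∈ Icc a b, (R ^ t) a c * R c b := by
        rw [pow_succ, IsUpperTriangular.mul_apply_eq_sum_Icc (hupper.pow t) hupper]
    _ = ∑ c ∈ Icc a b, (∑ k ∈ Icc (a.val + 1) (c.val + 1),
          powerFactor r (a.val + 1) (c.val + 1) k * r k k ^ (t - 1)) * r (c.val + 1) (b.val + 1) :=
        sum_congr rfl fun c hc => by rw [hind a c (mem_Icc.mp hc).1, hR]; rfl
    _ = ∑ k ∈ Icc (a.val + 1) (b.val + 1),
          powerFactor r (a.val + 1) (b.val + 1) k * (r k k ^ (t - 1) * r k k) := by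
        rw [Fin.sum_Icc_val_add_one (fun l => (∑ k ∈ Icc (a.val + 1) l,
          powerFactor r (a.val + 1) l k * r k k ^ (t - 1)) * r l (b.val + 1))]
        exact sum_Icc_sum_powerFactor_mul r _ fun k hk hkb => by
          have := mem_Icc.mp hk
          exact hdist k _ (by omega) (by omega) (by omega) (by omega) hkb
    _ = _ := by simp_rw [pow_sub_one_mul (by omega : t ≠ 0)]

/-- Lemma 1.2: Let `R` be an `L × L` real non-singular upper
triangular matrix (entries `r i j`, indices `1, …, L`) with pairwise distinct
(nonzero) diagonal entries, and let `p = powerFactor r` be its power factors.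
Fix `t ≥ 1`.  If `(R^t)_{i,j} = ∑_{k=i}^{j} p i j k * (r k k)^(t-1)` for all
`1 ≤ i ≤ j ≤ L`, then `(R^{t+1})_{i,j} = ∑_{k=i}^{j} p i j k * (r k k)^t`
for all `1 ≤ i ≤ j ≤ L`. -/
theorem power_factor_induction_step
    (L : ℕ) (hL : 1 ≤ L) (r : ℕ → ℕ → ℝ)
    (htri : ∀ i j, 1 ≤ i → i ≤ L → 1 ≤ j → j ≤ L → j < i → r i j = 0)
    (hnonsing : ∀ i, 1 ≤ i → i ≤ L → r i i ≠ 0)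
    (hdist : ∀ i j, 1 ≤ i → i ≤ L → 1 ≤ j → j ≤ L → i ≠ j → r i i ≠ r j j)
    (R : Matrix (Fin L) (Fin L) ℝ)
    (hR : R = Matrix.of fun a b : Fin L => r (a.val + 1) (b.val + 1))
    (t : ℕ) (ht : 1 ≤ t)
    (hind : ∀ a b : Fin L, a ≤ b →
      (R ^ t) a b = ∑ k ∈ Finset.Icc (a.val + 1) (b.val + 1),
        powerFactor r (a.val + 1) (b.val + 1) k * (r k k) ^ (t - 1)) :
    ∀ a b : Fin L, a ≤ b →
      (R ^ (t + 1)) a b = ∑ k ∈ Finset.Icc (a.val + 1) (b.val + 1),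
        powerFactor r (a.val + 1) (b.val + 1) k * (r k k) ^ t :=
  power_factor_induction_step_general L r htri hdist R hR t ht hind
end

section
/- Let R be an L×L real non-singular upper triangular matrix with pairwise distinct diagonal entries, let p_{i,j,k} denote its power factors, let e, q₀ ∈ ℝ^L, let f_opt > 0, and define the relative approximation error E_t := (eᵀ R^t q₀)/f_opt and the coefficients c_k := (Σ_{i=1}^{L} Σ_{j=i}^{L} e_i p_{i,j,k} q₀(j))/f_opt for k = 1, …, L. Then for every integer t ≥ 1, E_t = Σ_{k=1}^{L} c_k (λ_k)^{t-1}, where λ_k = r_{k,k} are the diagonal entries (the eigenvalues) of R. -/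
open Matrix Finset

/-! With `P k` the matrix `(p i j k)ᵢⱼ`, the recursion for `p i j k` with `k < j` says exactly
that `P k * R = r k k • P k` (the distinct diagonal makes the division legitimate), and the
clause for `p i j j` says that `∑ₖ P k = R`. Hence `R ^ (t + 1) = ∑ₖ r k k ^ t • P k` by
induction on `t`, and the closed form for `E t` follows by bilinearity of `eᵀ · q₀`. -/

theorem Fin.sum_univ_succ_val_eq_sum_Icc {M : Type*} [AddCommMonoid M] (L : ℕ) (g : ℕ → M) :
    ∑ a : Fin L, g (a.val + 1) = ∑ l ∈ Icc 1 L, g l := by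
  rw [Fin.sum_univ_eq_sum_range (fun m ↦ g (m + 1)), range_eq_Ico, sum_Ico_add',
    zero_add, Ico_add_one_right_eq_Icc]

namespace powerFactor

variable (r : ℕ → ℕ → ℝ) {i j k : ℕ}

theorem eq_zero_of_lt_or_lt (h : k < i ∨ j < k) : powerFactor r i j k = 0 := by
  rw [powerFactor, dif_pos h]

theorem self (j : ℕ) : powerFactor r j j j = r j j := by
  rw [powerFactor, dif_neg (by omega), dif_neg (by omega), dif_neg (by omega)]

theorem mul_sub_eq_sum (h₁ : i ≤ k) (h₂ : k < j) (hkj : r k k ≠ r j j) :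
    powerFactor r i j k * (r k k - r j j) =
      ∑ l ∈ Icc k (j - 1), powerFactor r i l k * r l j := by
  rw [powerFactor, dif_neg (by omega), dif_pos h₂, Finset.sum_attach _ fun l =>
    powerFactor r i l k * r l j, div_mul_cancel₀ _ (sub_ne_zero.mpr hkj)]

theorem sum_Icc (h : i ≤ j) : ∑ k ∈ Icc i j, powerFactor r i j k = r i j := by
  rcases h.eq_or_lt with rfl | hlt
  · simp [self]
  · obtain ⟨m, rfl⟩ : ∃ m, j = m + 1 := ⟨j - 1, by omega⟩
    rw [sum_Icc_succ_top (by omega), powerFactor, dif_neg (by omega), dif_neg (by omega),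
      dif_pos hlt, Nat.add_sub_cancel, Finset.sum_attach _ fun l => powerFactor r i (m + 1) l]
    ring

end powerFactor

noncomputable def powerFactorMatrix (L : ℕ) (r : ℕ → ℕ → ℝ) (k : ℕ) : Matrix (Fin L) (Fin L) ℝ :=
  Matrix.of fun a b ↦ powerFactor r (a.val + 1) (b.val + 1) k

section UpperTriangular

variable {L : ℕ} {r : ℕ → ℕ → ℝ}

theorem sum_Icc_powerFactor
    (htri : ∀ i j, 1 ≤ i → i ≤ L → 1 ≤ j → j ≤ L → j < i → r i j = 0)
    {i j : ℕ} (hi : i ∈ Icc 1 L) (hj : j ∈ Icc 1 L) :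
    ∑ k ∈ Icc 1 L, powerFactor r i j k = r i j := by
  rw [mem_Icc] at hi hj
  rcases le_or_gt i j with hij | hji
  · rw [← powerFactor.sum_Icc r hij]
    refine (sum_subset (fun k hk ↦ ?_) fun k hk hk' ↦ ?_).symm
    · rw [mem_Icc] at hk ⊢; omega
    · rw [mem_Icc] at hk hk'
      exact powerFactor.eq_zero_of_lt_or_lt r (by omega)
  · rw [htri i j hi.1 hi.2 hj.1 hj.2 hji]
    exact sum_eq_zero fun k _ ↦ powerFactor.eq_zero_of_lt_or_lt r (by omega)

theorem sum_powerFactor_mul_eq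
    (htri : ∀ i j, 1 ≤ i → i ≤ L → 1 ≤ j → j ≤ L → j < i → r i j = 0)
    (hdist : ∀ i j, 1 ≤ i → i ≤ L → 1 ≤ j → j ≤ L → i ≠ j → r i i ≠ r j j)
    {i j k : ℕ} (hj : j ∈ Icc 1 L) (hk : k ∈ Icc 1 L) :
    ∑ l ∈ Icc 1 L, powerFactor r i l k * r l j = powerFactor r i j k * r k k := by
  rw [mem_Icc] at hj hk
  have hsupp : ∑ l ∈ Icc 1 L, powerFactor r i l k * r l j =
      ∑ l ∈ Icc k j, powerFactor r i l k * r l j := by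
    refine (sum_subset (fun l hl ↦ ?_) fun l hl hl' ↦ ?_).symm
    · rw [mem_Icc] at hl ⊢; omega
    · rw [mem_Icc] at hl hl'
      rcases (by omega : l < k ∨ j < l) with h | h
      · rw [powerFactor.eq_zero_of_lt_or_lt r (.inr h), zero_mul]
      · rw [htri l j (by omega) hl.2 hj.1 hj.2 h, mul_zero]
  rw [hsupp]
  rcases lt_or_ge k i with hki | hik
  · simp [powerFactor.eq_zero_of_lt_or_lt r (.inl hki)]
  rcases lt_trichotomy k j with hkj | rfl | hjk
  · obtain ⟨m, rfl⟩ : ∃ m, j = m + 1 := ⟨j - 1, by omega⟩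
    have hrec := powerFactor.mul_sub_eq_sum r hik hkj
      (hdist k (m + 1) hk.1 hk.2 hj.1 hj.2 hkj.ne)
    rw [Nat.add_sub_cancel] at hrec
    rw [sum_Icc_succ_top hkj.le, ← hrec]
    ring
  · simp
  · simp [powerFactor.eq_zero_of_lt_or_lt r (.inr hjk), Icc_eq_empty_of_lt hjk]

theorem sum_powerFactorMatrix
    (htri : ∀ i j, 1 ≤ i → i ≤ L → 1 ≤ j → j ≤ L → j < i → r i j = 0) :
    ∑ k ∈ Icc 1 L, powerFactorMatrix L r k = Matrix.of fun a b : Fin L ↦ r (a + 1) (b + 1) := by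
  ext a b
  simp only [Matrix.sum_apply, powerFactorMatrix, Matrix.of_apply]
  exact sum_Icc_powerFactor htri (by simp) (by simp [Nat.succ_le_of_lt b.isLt])

theorem powerFactorMatrix_mul
    (htri : ∀ i j, 1 ≤ i → i ≤ L → 1 ≤ j → j ≤ L → j < i → r i j = 0)
    (hdist : ∀ i j, 1 ≤ i → i ≤ L → 1 ≤ j → j ≤ L → i ≠ j → r i i ≠ r j j)
    {k : ℕ} (hk : k ∈ Icc 1 L) :
    powerFactorMatrix L r k * Matrix.of (fun a b : Fin L ↦ r (a + 1) (b + 1)) =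
      r k k • powerFactorMatrix L r k := by
  ext a b
  simp only [Matrix.mul_apply, Matrix.smul_apply, powerFactorMatrix, Matrix.of_apply,
    smul_eq_mul]
  rw [Fin.sum_univ_succ_val_eq_sum_Icc L fun l ↦ powerFactor r (a + 1) l k * r l (b + 1),
    sum_powerFactor_mul_eq htri hdist (by simp [Nat.succ_le_of_lt b.isLt]) hk, mul_comm]

theorem pow_succ_eq_sum_smul_powerFactorMatrix
    (htri : ∀ i j, 1 ≤ i → i ≤ L → 1 ≤ j → j ≤ L → j < i → r i j = 0)
    (hdist : ∀ i j, 1 ≤ i → i ≤ L → 1 ≤ j → j ≤ L → i ≠ j → r i i ≠ r j j) (t : ℕ) :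
    (Matrix.of fun a b : Fin L ↦ r (a + 1) (b + 1)) ^ (t + 1) =
      ∑ k ∈ Icc 1 L, r k k ^ t • powerFactorMatrix L r k := by
  induction t with
  | zero => simp [sum_powerFactorMatrix htri]
  | succ t ih =>
    rw [pow_succ, ih, sum_mul]
    refine sum_congr rfl fun k hk ↦ ?_
    rw [smul_mul_assoc, powerFactorMatrix_mul htri hdist hk, smul_smul, pow_succ]

end UpperTriangular

theorem dotProduct_powerFactorMatrix_mulVec (L : ℕ) (r : ℕ → ℕ → ℝ) (e q : ℕ → ℝ) (k : ℕ) :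
    (fun a : Fin L ↦ e (a + 1)) ⬝ᵥ (powerFactorMatrix L r k *ᵥ fun a ↦ q (a + 1)) =
      ∑ i ∈ Icc 1 L, ∑ j ∈ Icc i L, e i * powerFactor r i j k * q j := by
  simp only [dotProduct, mulVec, powerFactorMatrix, Matrix.of_apply, mul_sum]
  rw [Fin.sum_univ_succ_val_eq_sum_Icc L fun i ↦ ∑ b : Fin L,
    e i * (powerFactor r i (b + 1) k * q (b + 1))]
  refine sum_congr rfl fun i hi ↦ ?_
  rw [Fin.sum_univ_succ_val_eq_sum_Icc L fun j ↦ e i * (powerFactor r i j k * q j)]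
  refine (sum_subset (fun j hj ↦ ?_) fun j hj hj' ↦ ?_).symm.trans
    (sum_congr rfl fun j _ ↦ by ring)
  · rw [mem_Icc] at hi hj ⊢; omega
  · rw [mem_Icc] at hj hj'
    rw [powerFactor.eq_zero_of_lt_or_lt r (by omega), zero_mul, mul_zero]

theorem relative_approximation_error_closed_form_general
    (L : ℕ) (r : ℕ → ℕ → ℝ)
    (htri : ∀ i j, 1 ≤ i → i ≤ L → 1 ≤ j → j ≤ L → j < i → r i j = 0)
    (hdist : ∀ i j, 1 ≤ i → i ≤ L → 1 ≤ j → j ≤ L → i ≠ j → r i i ≠ r j j)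
    (R : Matrix (Fin L) (Fin L) ℝ)
    (hR : R = Matrix.of fun a b : Fin L => r (a.val + 1) (b.val + 1))
    (e q₀ : ℕ → ℝ) (fopt : ℝ)
    (E : ℕ → ℝ)
    (hE : ∀ t : ℕ, E t =
      ((fun a : Fin L => e (a.val + 1)) ⬝ᵥ
        ((R ^ t) *ᵥ fun a : Fin L => q₀ (a.val + 1))) / fopt)
    (c : ℕ → ℝ)
    (hc : ∀ k, c k =
      (∑ i ∈ Finset.Icc 1 L, ∑ j ∈ Finset.Icc i L,
        e i * powerFactor r i j k * q₀ j) / fopt) :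
    ∀ t : ℕ, 1 ≤ t →
      E t = ∑ k ∈ Finset.Icc 1 L, c k * (r k k) ^ (t - 1) := by
  intro t ht
  obtain ⟨s, rfl⟩ := Nat.exists_eq_add_of_le' ht
  subst hR
  rw [hE, pow_succ_eq_sum_smul_powerFactorMatrix htri hdist, sum_mulVec, dotProduct_sum,
    sum_div, Nat.add_sub_cancel]
  refine sum_congr rfl fun k _ ↦ ?_
  rw [smul_mulVec, dotProduct_smul, dotProduct_powerFactorMatrix_mulVec, hc, smul_eq_mul]
  ring

/-- Theorem 1: Let `R` be an `L × L` real non-singular upper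
triangular matrix (entries `r i j`, indices `1, …, L`) with pairwise distinct
(nonzero) diagonal entries, `p = powerFactor r` its power factors, `e` and `q₀`
vectors in `ℝ^L`, `f_opt > 0`, `E t = (eᵀ R^t q₀)/f_opt` the relative
approximation error and `c k = (∑_{i=1}^{L} ∑_{j=i}^{L} e i * p i j k * q₀ j)/f_opt`.
Then for every `t ≥ 1`, `E t = ∑_{k=1}^{L} c k * (λ k)^(t-1)` where `λ k = r k k`. -/
theorem relative_approximation_error_closed_form
    (L : ℕ) (hL : 1 ≤ L) (r : ℕ → ℕ → ℝ)
    (htri : ∀ i j, 1 ≤ i → i ≤ L → 1 ≤ j → j ≤ L → j < i → r i j = 0)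
    (hnonsing : ∀ i, 1 ≤ i → i ≤ L → r i i ≠ 0)
    (hdist : ∀ i j, 1 ≤ i → i ≤ L → 1 ≤ j → j ≤ L → i ≠ j → r i i ≠ r j j)
    (R : Matrix (Fin L) (Fin L) ℝ)
    (hR : R = Matrix.of fun a b : Fin L => r (a.val + 1) (b.val + 1))
    (e q₀ : ℕ → ℝ) (fopt : ℝ) (hfopt : 0 < fopt)
    (E : ℕ → ℝ)
    (hE : ∀ t : ℕ, E t =
      ((fun a : Fin L => e (a.val + 1)) ⬝ᵥ
        ((R ^ t) *ᵥ fun a : Fin L => q₀ (a.val + 1))) / fopt)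
    (c : ℕ → ℝ)
    (hc : ∀ k, c k =
      (∑ i ∈ Finset.Icc 1 L, ∑ j ∈ Finset.Icc i L,
        e i * powerFactor r i j k * q₀ j) / fopt) :
    ∀ t : ℕ, 1 ≤ t →
      E t = ∑ k ∈ Finset.Icc 1 L, c k * (r k k) ^ (t - 1) :=
  relative_approximation_error_closed_form_general L r htri hdist R hR e q₀ fopt E hE c hc
end

section
/- Let R be the 4×4 real matrix with rows (3/4, 1/2, 0, 0), (0, 1/2, 3/4, 0), (0, 0, 1/4, 1), (0, 0, 0, 0), let e = (1, 2, 3, 4)ᵀ and q₀ = (0, 0, 0, 1)ᵀ. Then for every integer t ≥ 0, the relative approximation error E_t := (eᵀ R^t q₀)/4 equals (3/4)^t. -/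
open Matrix

-- `eᵀ` is a left eigenvector of `R` for the eigenvalue `3/4`, so `eᵀ R^t q₀ = (3/4)^t eᵀ q₀`.

section LeftEigenvector

variable {n α : Type*} [Fintype n] [DecidableEq n] [CommSemiring α]
  {M : Matrix n n α} {v : n → α} {c : α}

theorem vecMul_pow_of_vecMul_eq_smul (h : v ᵥ* M = c • v) (t : ℕ) :
    v ᵥ* (M ^ t) = c ^ t • v := by
  induction t with
  | zero => simp
  | succ t ih =>
    rw [pow_succ, ← vecMul_vecMul, ih, smul_vecMul, h, smul_smul, pow_succ]

theorem dotProduct_pow_mulVec_of_vecMul_eq_smul (h : v ᵥ* M = c • v) (w : n → α) (t : ℕ) :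
    v ⬝ᵥ (M ^ t *ᵥ w) = c ^ t * (v ⬝ᵥ w) := by
  rw [dotProduct_mulVec, vecMul_pow_of_vecMul_eq_smul h, smul_dotProduct, smul_eq_mul]

end LeftEigenvector

/-- for the (1+1) elitist EA with onebit mutation on OneMax
with `n = 4`, starting from `0000`, the relative approximation error is
`E_t = (eᵀ R^t q₀)/4 = (3/4)^t` for every `t ≥ 0`. -/
theorem onemax_relative_approximation_error
    (R : Matrix (Fin 4) (Fin 4) ℝ)
    (hR : R = !![3/4, 1/2, 0, 0;
                 0, 1/2, 3/4, 0;
                 0, 0, 1/4, 1;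
                 0, 0, 0, 0])
    (e q₀ : Fin 4 → ℝ)
    (he : e = ![1, 2, 3, 4]) (hq₀ : q₀ = ![0, 0, 0, 1]) :
    ∀ t : ℕ, (e ⬝ᵥ ((R ^ t) *ᵥ q₀)) / 4 = (3/4 : ℝ) ^ t := by
  subst hR he hq₀
  have left_eigenvector : ![(1 : ℝ), 2, 3, 4] ᵥ* !![3/4, 1/2, 0, 0;
      0, 1/2, 3/4, 0; 0, 0, 1/4, 1; 0, 0, 0, 0] = (3/4 : ℝ) • ![1, 2, 3, 4] := by
    ext i
    fin_cases i <;> simp [vecMul, dotProduct, Fin.sum_univ_succ] <;> norm_num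
  intro t
  rw [dotProduct_pow_mulVec_of_vecMul_eq_smul left_eigenvector]
  simp [dotProduct, Fin.sum_univ_succ]
end

section
/- Let E_t := [3 ln(5/4) · (3/4)^{t-1} + (3 ln(5/3) − 6 ln(5/4)) · (1/2)^{t-1} + (3 ln(5/4) − 3 ln(5/3) + ln(5/2)) · (1/4)^{t-1}] / ln 5 for integers t ≥ 1. Then E_t > 0 for all t ≥ 1, and the average convergence rate R_t := 1 − (E_t)^{1/t} converges to 1/4 as t → ∞. -/
/-!
Factoring out the dominant geometric term, `E t = (3/4)^t · G t` where `G t` tends to the positive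
limit `4 A / (3 ln 5)`, `A = 3 ln(5/4)`; the two subdominant coefficients are positive as well,
so `G t > 0`. Hence `(E t)^(1/t) = 3/4 · (G t)^(1/t) → 3/4 · (4 A / (3 ln 5))^0 = 3/4`.
-/

open Filter Topology Real

theorem tendsto_pow_mul_rpow_one_div {r L : ℝ} (hr : 0 < r) {g : ℕ → ℝ}
    (hg : Tendsto g atTop (𝓝 L)) (hL : 0 < L) :
    Tendsto (fun t : ℕ => (r ^ t * g t) ^ ((1 : ℝ) / t)) atTop (𝓝 r) := by
  have hroot : Tendsto (fun t : ℕ => g t ^ ((1 : ℝ) / t)) atTop (𝓝 1) := by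
    simpa using hg.rpow tendsto_one_div_atTop_nhds_zero_nat (Or.inl hL.ne')
  refine (by simpa using hroot.const_mul r : Tendsto _ atTop (𝓝 r)).congr' ?_
  filter_upwards [hg.eventually (lt_mem_nhds hL), eventually_ge_atTop 1] with t hgt ht
  rw [mul_rpow (by positivity) hgt.le, one_div,
    pow_rpow_inv_natCast hr.le (Nat.one_le_iff_ne_zero.mp ht)]

theorem six_log_five_fourths_lt_three_log_five_thirds :
    6 * log (5 / 4) < 3 * log (5 / 3) := by
  have h : log ((5 / 4 : ℝ) ^ 6) < log ((5 / 3 : ℝ) ^ 3) :=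
    log_lt_log (by positivity) (by norm_num)
  rw [log_pow, log_pow] at h
  push_cast at h
  linarith

theorem three_log_five_thirds_lt_three_log_five_fourths_add_log_five_halves :
    3 * log (5 / 3) < 3 * log (5 / 4) + log (5 / 2) := by
  have h : log ((5 / 3 : ℝ) ^ 3) < log ((5 / 4 : ℝ) ^ 3 * (5 / 2)) :=
    log_lt_log (by positivity) (by norm_num)
  rw [log_mul (by positivity) (by norm_num), log_pow, log_pow] at h
  push_cast at h
  linarith

/-- `E (k + 1) / (3/4)^k`. -/
noncomputable def normalizedError (k : ℕ) : ℝ :=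
  (3 * log (5 / 4) + (3 * log (5 / 3) - 6 * log (5 / 4)) * (2 / 3 : ℝ) ^ k
    + (3 * log (5 / 4) - 3 * log (5 / 3) + log (5 / 2)) * (1 / 3 : ℝ) ^ k) / log 5

theorem normalizedError_pos (k : ℕ) : 0 < normalizedError k := by
  have hA : 0 < log (5 / 4 : ℝ) := log_pos (by norm_num)
  have hB := six_log_five_fourths_lt_three_log_five_thirds
  have hC := three_log_five_thirds_lt_three_log_five_fourths_add_log_five_halves
  unfold normalizedError
  apply div_pos _ (log_pos (by norm_num))
  have : 0 < (3 * log (5 / 3) - 6 * log (5 / 4)) * (2 / 3 : ℝ) ^ k :=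
    mul_pos (by linarith) (by positivity)
  have : 0 < (3 * log (5 / 4) - 3 * log (5 / 3) + log (5 / 2)) * (1 / 3 : ℝ) ^ k :=
    mul_pos (by linarith) (by positivity)
  linarith

theorem tendsto_normalizedError :
    Tendsto normalizedError atTop (𝓝 (3 * log (5 / 4) / log 5)) := by
  have h23 := tendsto_pow_atTop_nhds_zero_of_lt_one (r := (2 / 3 : ℝ)) (by norm_num) (by norm_num)
  have h13 := tendsto_pow_atTop_nhds_zero_of_lt_one (r := (1 / 3 : ℝ)) (by norm_num) (by norm_num)
  have h := ((tendsto_const_nhds (x := 3 * log (5 / 4))).add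
    (h23.const_mul (3 * log (5 / 3) - 6 * log (5 / 4)))).add
    (h13.const_mul (3 * log (5 / 4) - 3 * log (5 / 3) + log (5 / 2)))
  simp only [mul_zero, add_zero] at h
  exact h.div_const (log 5)

/-- for the (1+1) elitist EA with onebit mutation maximizing
the logarithmic function `ln(|x|+1)` with `n = 4`, starting from `0000`, the
relative approximation error
`E t = (3 ln(5/4) (3/4)^(t-1) + (3 ln(5/3) − 6 ln(5/4)) (1/2)^(t-1)
  + (3 ln(5/4) − 3 ln(5/3) + ln(5/2)) (1/4)^(t-1)) / ln 5`
is positive for all `t ≥ 1`, and the average convergence rate `1 − (E t)^(1/t)`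
converges to `1/4` as `t → ∞`. -/
theorem log_average_convergence_rate_limit
    (E : ℕ → ℝ)
    (hE : ∀ t : ℕ, 1 ≤ t →
      E t = (3 * Real.log (5/4) * (3/4 : ℝ) ^ (t - 1)
          + (3 * Real.log (5/3) - 6 * Real.log (5/4)) * (1/2 : ℝ) ^ (t - 1)
          + (3 * Real.log (5/4) - 3 * Real.log (5/3) + Real.log (5/2))
              * (1/4 : ℝ) ^ (t - 1)) / Real.log 5) :
    (∀ t : ℕ, 1 ≤ t → 0 < E t) ∧
      Tendsto (fun t : ℕ => 1 - (E t) ^ ((1 : ℝ) / t)) atTop (nhds (1/4 : ℝ)) := by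
  have hfactor : ∀ t : ℕ, 1 ≤ t → E t = (3 / 4 : ℝ) ^ t * (4 / 3 * normalizedError (t - 1)) := by
    intro t ht
    obtain ⟨k, rfl⟩ := Nat.exists_eq_add_of_le' ht
    rw [hE _ ht, normalizedError, Nat.add_sub_cancel, pow_succ,
      show (1 / 2 : ℝ) = 3 / 4 * (2 / 3) by norm_num, show (1 / 4 : ℝ) = 3 / 4 * (1 / 3) by norm_num,
      mul_pow, mul_pow]
    field_simp
  have hlimit : Tendsto (fun t : ℕ => 4 / 3 * normalizedError (t - 1)) atTop
      (𝓝 (4 / 3 * (3 * log (5 / 4) / log 5))) :=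
    (tendsto_normalizedError.comp (tendsto_sub_atTop_nat 1)).const_mul _
  have hL : 0 < 4 / 3 * (3 * log (5 / 4) / log 5) := by
    have : 0 < log (5 / 4 : ℝ) := log_pos (by norm_num)
    have : 0 < log (5 : ℝ) := log_pos (by norm_num)
    positivity
  refine ⟨fun t ht => ?_, ?_⟩
  · have := normalizedError_pos (t - 1)
    rw [hfactor t ht]
    positivity
  · have hroot := (tendsto_pow_mul_rpow_one_div (r := 3 / 4) (by norm_num) hlimit hL).const_sub (1 : ℝ)
    rw [show (1 : ℝ) - 3 / 4 = 1 / 4 by norm_num] at hroot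
    refine hroot.congr' ?_
    filter_upwards [eventually_ge_atTop 1] with t ht
    rw [hfactor t ht]
end
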